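/- Let Z(x0,x1,x2,x3,x4,x5) = x1·x2·x3·x4·x5 (the toy Boolean function). For the map on GF(2)^4 given by (e,f,g,h) ↦ (Z' ⊕ h, e, f, g), where Z' is any product of five variables that includes both e and f as factors, the polynomial P = h⊕g⊕f⊕e⊕fgh⊕egh⊕efh⊕efg is invariant: substituting the round update and expanding over GF(2) returns P. -/

import Mathlib

/-!
Replacing the first argument `e` of `P` by `z + h` shifts `P` by `z·(1 + ef + eg + fg)`. When the
monomial `z` has `e` and `f` as factors, idempotence gives `z·ef = z` and `z·eg = z·fg = z·g`, so
the shift is `2z + 2zg = 0` over GF(2).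
-/

/-- The polynomial `P = h ⊕ g ⊕ f ⊕ e ⊕ fgh ⊕ egh ⊕ efh ⊕ efg` from Theorem 5.3.1. -/
def P (e f g h : ZMod 2) : ZMod 2 :=
  h + g + f + e + f*g*h + e*g*h + e*f*h + e*f*g

theorem P_add_left_shift (z e f g h : ZMod 2) :
    P (z + h) e f g = P e f g h + z * (1 + e * f + e * g + f * g) := by
  unfold P
  ring

theorem CharTwo.mul_one_add_pair_products_eq_zero {R : Type*} [CommRing R] [CharP R 2]
    {z e f : R} (he : z * e = z) (hf : z * f = z) (g : R) :
    z * (1 + e * f + e * g + f * g) = 0 :=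
  calc z * (1 + e * f + e * g + f * g) = (z + z) + (z * g + z * g) := by
        linear_combination (f + g) * he + (1 + g) * hf
    _ = 0 := by simp only [CharTwo.add_self_eq_zero]

theorem ZMod.mul_self_eq_self_of_two (x : ZMod 2) : x * x = x := by
  rw [← sq, ZMod.pow_card]

/-- With `Z' = i·f·e·o·c` a degree-5 monomial containing both `e` and `f` as
factors, `P` is invariant under the round update `(e,f,g,h) ↦ (Z' ⊕ h, e, f, g)`. -/
theorem P_invariant_toy (e f g h i o c : ZMod 2) :
    P (i*f*e*o*c + h) e f g = P e f g h := by
  have he : i*f*e*o*c * e = i*f*e*o*c := by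
    linear_combination i * f * o * c * ZMod.mul_self_eq_self_of_two e
  have hf : i*f*e*o*c * f = i*f*e*o*c := by
    linear_combination i * e * o * c * ZMod.mul_self_eq_self_of_two f
  rw [P_add_left_shift, CharTwo.mul_one_add_pair_products_eq_zero he hf, add_zero]
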